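/- Let d ≥ 1 and let B_j = (u_{1,j}, …, u_{d,j}), j = 1, …, d+1, be mutually unbiased bases of ℂ^d. Then Σ_{j=1}^{d+1} Σ_{i=1}^{d} (1/(d+1))·|u_{i,j} ⊗ ū_{i,j}⟩⟨u_{i,j} ⊗ ū_{i,j}| = T_inv, i.e., the uniform randomization of the d+1 basis measurements realizes T_inv := |φ⁰⟩⟨φ⁰| + (1/(d+1))(I − |φ⁰⟩⟨φ⁰|) on ℂ^d ⊗ ℂ^d. -/

import Mathlib

open scoped BigOperators ComplexInnerProductSpace
open Matrix MeasureTheory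

noncomputable section

/-- `ℂ^d` with the standard Hermitian inner product. -/
abbrev V (d : ℕ) : Type := EuclideanSpace ℂ (Fin d)

/-- `ℂ^d ⊗ ℂ^d`, identified with functions on `Fin d × Fin d`. -/
abbrev V2 (d : ℕ) : Type := EuclideanSpace ℂ (Fin d × Fin d)

/-- operators on `ℂ^d ⊗ ℂ^d`, as matrices. -/
abbrev Op2 (d : ℕ) : Type := Matrix (Fin d × Fin d) (Fin d × Fin d) ℂ

/-- tensor (Kronecker) product of vectors. -/
def tens {d : ℕ} (u v : V d) : V2 d := WithLp.toLp 2 (fun p : Fin d × Fin d => u p.1 * v p.2)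

/-- entrywise complex conjugate `ū` of a vector. -/
def cvec {d : ℕ} (u : V d) : V d := WithLp.toLp 2 (fun k : Fin d => starRingEnd ℂ (u k))

/-- the maximally entangled state `φ⁰ = (1/√d) Σ_k e_k ⊗ e_k`. -/
def phi0 (d : ℕ) : V2 d := WithLp.toLp 2 (fun p : Fin d × Fin d => if p.1 = p.2 then ((Real.sqrt d : ℂ))⁻¹ else 0)

/-- the rank-one operator `|w⟩⟨w|`. -/
def outer {d : ℕ} (w : V2 d) : Op2 d := Matrix.of fun p q => w p * starRingEnd ℂ (w q)

/-- `T_inv = |φ⁰⟩⟨φ⁰| + (1/(d+1))(I - |φ⁰⟩⟨φ⁰|)`. -/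
def Tinv (d : ℕ) : Op2 d := outer (phi0 d) + (1 / ((d : ℂ) + 1)) • (1 - outer (phi0 d))


/-- `u j` is the `j`-th orthonormal basis (`j = 1, …, d+1`); the bases are
mutually unbiased: `|⟨u_{i,j}, u_{i',j'}⟩|² = 1/d` whenever `j ≠ j'`. -/
def IsMUB {d : ℕ} (u : Fin (d + 1) → Fin d → V d) : Prop :=
  (∀ j, Orthonormal ℂ (u j)) ∧
    ∀ j j' i i', j ≠ j' → ‖⟪u j i, u j' i'⟫‖ ^ 2 = 1 / d

/-! Write `M = Σ_x |u_x ⊗ ū_x⟩⟨u_x ⊗ ū_x|` and `T = 1 + d |φ⁰⟩⟨φ⁰| = (d + 1) T_inv`. Both are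
Hermitian, so `M = T` follows once `tr (M M) = tr (M T) = tr (T T)`, because then
`tr ((M - T)ᴴ (M - T)) = 0`. Every trace of a product of rank-one operators is a product of inner
products, and `⟪u ⊗ ū, v ⊗ v̄⟫ = |⟪u, v⟫|²`, `⟪φ⁰, u ⊗ ū⟫ = ‖u‖² / √d`. This gives
`tr (M T) = 2 (d + 1) d` for any `(d + 1) d` unit vectors and `tr (T T) = 2 d (d + 1)`, while
`tr (M M) = Σ_{x,y} |⟪u_x, u_y⟫|⁴`, which mutual unbiasedness pins down to `2 d (d + 1)` as well. -/

open ComplexConjugate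

open scoped ComplexOrder in
theorem Matrix.IsHermitian.eq_of_trace_mul_eq {n 𝕜 : Type*} [Fintype n] [RCLike 𝕜]
    {A B : Matrix n n 𝕜} (hA : A.IsHermitian) (hB : B.IsHermitian)
    (hAB : trace (A * B) = trace (A * A)) (hBB : trace (B * B) = trace (A * A)) : A = B := by
  have h : trace ((A - B)ᴴ * (A - B)) = 0 := by
    rw [(hA.sub hB).eq, sub_mul, mul_sub, mul_sub, trace_sub, trace_sub, trace_sub,
      trace_mul_comm B A, hAB, hBB, sub_self]
  exact sub_eq_zero.mp (trace_conjTranspose_mul_self_eq_zero_iff.mp h)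

theorem inv_sqrt_mul_inv_sqrt (d : ℕ) :
    (Real.sqrt d : ℂ)⁻¹ * (Real.sqrt d : ℂ)⁻¹ = (d : ℂ)⁻¹ := by
  rw [← mul_inv, ← Complex.ofReal_mul, Real.mul_self_sqrt d.cast_nonneg, Complex.ofReal_natCast]

section Outer

variable {d : ℕ}

theorem outer_isHermitian (w : V2 d) : (outer w).IsHermitian := by
  ext p q
  simp [outer, mul_comm]

theorem trace_outer (w : V2 d) : trace (outer w) = ⟪w, w⟫ := by
  simp only [outer, trace, diag, of_apply, PiLp.inner_apply, RCLike.inner_apply]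

theorem trace_outer_mul_outer (w w' : V2 d) :
    trace (outer w * outer w') = ⟪w, w'⟫ * ⟪w', w⟫ := by
  simp only [outer, trace, diag, mul_apply, of_apply, PiLp.inner_apply, RCLike.inner_apply,
    Finset.sum_mul_sum]
  rw [Finset.sum_comm]
  exact Finset.sum_congr rfl fun p _ => Finset.sum_congr rfl fun q _ => by ring

end Outer

section Tensor

variable {d : ℕ}

theorem inner_tens (u v u' v' : V d) : ⟪tens u v, tens u' v'⟫ = ⟪u, u'⟫ * ⟪v, v'⟫ := by
  simp only [tens, PiLp.inner_apply, RCLike.inner_apply, Fintype.sum_prod_type,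
    Finset.sum_mul_sum, map_mul]
  exact Finset.sum_congr rfl fun a _ => Finset.sum_congr rfl fun b _ => by ring

theorem inner_cvec (u v : V d) : ⟪cvec u, cvec v⟫ = ⟪v, u⟫ := by
  simp only [cvec, PiLp.inner_apply, RCLike.inner_apply, Complex.conj_conj]
  exact Finset.sum_congr rfl fun a _ => mul_comm _ _

theorem inner_phi0_tens_cvec (u v : V d) :
    ⟪phi0 d, tens u (cvec v)⟫ = (Real.sqrt d : ℂ)⁻¹ * ⟪v, u⟫ := by
  simp only [phi0, tens, cvec, PiLp.inner_apply, RCLike.inner_apply, Fintype.sum_prod_type,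
    apply_ite conj, map_zero, Finset.mul_sum]
  simp [mul_comm]

theorem inner_phi0_self (hd : d ≠ 0) : ⟪phi0 d, phi0 d⟫ = 1 := by
  simp only [phi0, PiLp.inner_apply, RCLike.inner_apply, Fintype.sum_prod_type]
  simp [inv_sqrt_mul_inv_sqrt, hd]

end Tensor

section Traces

variable {d : ℕ} {ι : Type*} [Fintype ι] (v : ι → V d)

theorem trace_sum_outer_tens_cvec_sq :
    trace ((∑ x, outer (tens (v x) (cvec (v x)))) * ∑ y, outer (tens (v y) (cvec (v y)))) =
      ∑ x, ∑ y, (⟪v x, v y⟫ * ⟪v y, v x⟫) ^ 2 := by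
  simp only [Finset.sum_mul, Finset.mul_sum, trace_sum, trace_outer_mul_outer, inner_tens,
    inner_cvec]
  exact Finset.sum_congr rfl fun x _ => Finset.sum_congr rfl fun y _ => by ring

theorem trace_outer_tens_cvec_mul (hd : d ≠ 0) (u : V d) (hu : ⟪u, u⟫ = 1) :
    trace (outer (tens u (cvec u)) * ((1 : Op2 d) + (d : ℂ) • outer (phi0 d))) = 2 := by
  have hφ : ⟪phi0 d, tens u (cvec u)⟫ = (Real.sqrt d : ℂ)⁻¹ := by
    rw [inner_phi0_tens_cvec, hu, mul_one]
  have hφ' : ⟪tens u (cvec u), phi0 d⟫ = (Real.sqrt d : ℂ)⁻¹ := by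
    rw [← inner_conj_symm, hφ, map_inv₀, Complex.conj_ofReal]
  rw [mul_add, mul_one, mul_smul_comm, trace_add, trace_smul, trace_outer, trace_outer_mul_outer,
    hφ, hφ', inner_tens, inner_cvec, hu, inv_sqrt_mul_inv_sqrt, smul_eq_mul,
    mul_inv_cancel₀ (Nat.cast_ne_zero.mpr hd)]
  norm_num

theorem trace_sum_outer_tens_cvec_mul (hd : d ≠ 0) (hv : ∀ x, ⟪v x, v x⟫ = 1) :
    trace ((∑ x, outer (tens (v x) (cvec (v x)))) * ((1 : Op2 d) + (d : ℂ) • outer (phi0 d))) =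
      2 * Fintype.card ι := by
  simp only [Finset.sum_mul, trace_sum, trace_outer_tens_cvec_mul hd _ (hv _), Finset.sum_const,
    Finset.card_univ, nsmul_eq_mul]
  ring

theorem trace_one_add_smul_outer_phi0_sq (hd : d ≠ 0) :
    trace (((1 : Op2 d) + (d : ℂ) • outer (phi0 d)) * ((1 : Op2 d) + (d : ℂ) • outer (phi0 d))) =
      2 * d * (d + 1) := by
  simp only [mul_add, add_mul, mul_one, one_mul, smul_mul_smul, trace_add, trace_smul, trace_one,
    trace_outer, trace_outer_mul_outer, inner_phi0_self hd, Fintype.card_prod, Fintype.card_fin,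
    Nat.cast_mul, smul_eq_mul]
  ring

end Traces

section MUB

variable {d : ℕ} {u : Fin (d + 1) → Fin d → V d}

theorem IsMUB.inner_mul_inner (hu : IsMUB u) (j j' : Fin (d + 1)) (i i' : Fin d) :
    ⟪u j i, u j' i'⟫ * ⟪u j' i', u j i⟫ =
      if j = j' then (if i = i' then 1 else 0) else (d : ℂ)⁻¹ := by
  split_ifs with hj hi
  · subst hj hi
    simp [(hu.1 j).1 i]
  · subst hj
    simp [orthonormal_iff_ite.mp (hu.1 j), hi]
  · rw [← inner_conj_symm (u j' i') (u j i), Complex.mul_conj, Complex.normSq_eq_norm_sq,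
      hu.2 j j' i i' hj]
    push_cast
    rw [one_div]

theorem IsMUB.sum_sum_sq_inner_mul_inner (hu : IsMUB u) (hd : d ≠ 0) :
    ∑ x : Fin (d + 1) × Fin d, ∑ y : Fin (d + 1) × Fin d,
      (⟪u x.1 x.2, u y.1 y.2⟫ * ⟪u y.1 y.2, u x.1 x.2⟫) ^ 2 = 2 * d * (d + 1) := by
  have hbasis (j j' : Fin (d + 1)) (i : Fin d) :
      ∑ i', (⟪u j i, u j' i'⟫ * ⟪u j' i', u j i⟫) ^ 2 = if j = j' then 1 else (d : ℂ)⁻¹ := by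
    simp only [hu.inner_mul_inner]
    split_ifs
    · simp
    · simp [sq, hd]
  have hrow (j : Fin (d + 1)) (i : Fin d) :
      ∑ y : Fin (d + 1) × Fin d, (⟪u j i, u y.1 y.2⟫ * ⟪u y.1 y.2, u j i⟫) ^ 2 = 2 := by
    rw [Fintype.sum_prod_type, Fintype.sum_eq_add_sum_compl j]
    simp only [hbasis, if_true]
    rw [Finset.sum_congr rfl fun j' hj' => if_neg (Ne.symm (by simpa using hj')),
      Finset.sum_const, Finset.card_compl, Fintype.card_fin, Finset.card_singleton,
      add_tsub_cancel_right, nsmul_eq_mul, mul_inv_cancel₀ (Nat.cast_ne_zero.mpr hd)]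
    norm_num
  simp only [hrow, Finset.sum_const, Finset.card_univ, Fintype.card_prod, Fintype.card_fin,
    nsmul_eq_mul]
  push_cast
  ring

end MUB

theorem Tinv_eq_smul (d : ℕ) :
    Tinv d = (1 / ((d : ℂ) + 1)) • ((1 : Op2 d) + (d : ℂ) • outer (phi0 d)) := by
  have hd : (d : ℂ) + 1 ≠ 0 := by exact_mod_cast d.succ_ne_zero
  ext p q
  simp only [Tinv, one_div, Matrix.add_apply, Matrix.smul_apply, Matrix.sub_apply, smul_eq_mul]
  field_simp
  ring

/-- The uniform randomization of `d+1` mutually unbiased basis measurements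
realizes `T_inv`. -/
theorem stmt9 (d : ℕ) (hd : 1 ≤ d) (u : Fin (d + 1) → Fin d → V d) (hu : IsMUB u) :
    ∑ j, ∑ i, (1 / ((d : ℂ) + 1)) • outer (tens (u j i) (cvec (u j i))) = Tinv d := by
  have hd0 : d ≠ 0 := by omega
  have hunit (x : Fin (d + 1) × Fin d) : ⟪u x.1 x.2, u x.1 x.2⟫ = 1 := by
    rw [inner_self_eq_norm_sq_to_K, (hu.1 x.1).1 x.2]
    norm_num
  set M := ∑ x : Fin (d + 1) × Fin d, outer (tens (u x.1 x.2) (cvec (u x.1 x.2)))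
  have hM_herm : M.IsHermitian := isSelfAdjoint_sum _ fun x _ => outer_isHermitian _
  have hT_herm : ((1 : Op2 d) + (d : ℂ) • outer (phi0 d)).IsHermitian :=
    isHermitian_one.add ((outer_isHermitian _).smul (IsSelfAdjoint.natCast d))
  have hM : M = (1 : Op2 d) + (d : ℂ) • outer (phi0 d) := by
    refine hM_herm.eq_of_trace_mul_eq hT_herm ?_ ?_
    · rw [trace_sum_outer_tens_cvec_mul _ hd0 hunit, trace_sum_outer_tens_cvec_sq,
        hu.sum_sum_sq_inner_mul_inner hd0, Fintype.card_prod, Fintype.card_fin, Fintype.card_fin]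
      push_cast
      ring
    · rw [trace_one_add_smul_outer_phi0_sq hd0, trace_sum_outer_tens_cvec_sq,
        hu.sum_sum_sq_inner_mul_inner hd0]
  rw [Tinv_eq_smul, ← hM, Finset.smul_sum, Fintype.sum_prod_type]
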